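/- Let 𝕋 be an almost periodic time scale (Π ≠ {0}) and u ∈ U_∞^Inv. If f, g ∈ PAP(𝕋,ℝ,u), then f + g ∈ PAP(𝕋,ℝ,u) and the pointwise product f·g ∈ PAP(𝕋,ℝ,u); moreover, if f ∈ PAP(𝕋,ℝ,u) and g ∈ AP(𝕋,ℝ), then f·g ∈ PAP(𝕋,ℝ,u). -/

import Mathlib

open MeasureTheory Filter Set

noncomputable section

/-- Forward jump operator of a time scale `T`. -/
def tsSigma (T : Set ℝ) (t : ℝ) : ℝ := sInf {s | s ∈ T ∧ t < s}

/-- Graininess of a time scale. -/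
def tsGrain (T : Set ℝ) (t : ℝ) : ℝ := tsSigma T t - t

/-- The set `Π` of translation numbers of a time scale. -/
def tsPi (T : Set ℝ) : Set ℝ := {τ : ℝ | ∀ t ∈ T, t + τ ∈ T ∧ t - τ ∈ T}

/-- An almost periodic time scale: a nonempty closed subset of `ℝ` with `Π ≠ {0}`. -/
def APTimeScale (T : Set ℝ) : Prop :=
  T.Nonempty ∧ IsClosed T ∧ ∃ τ ∈ tsPi T, τ ≠ 0

/-- The Δ-measure of the time scale `T`:
Lebesgue measure restricted to `T` plus point masses `μ(t)·δ_t` at right-scattered points. -/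
def deltaMeasure (T : Set ℝ) : Measure ℝ :=
  volume.restrict T +
    Measure.sum (fun p : {t : ℝ // t ∈ T ∧ t < tsSigma T t} =>
      (ENNReal.ofReal (tsGrain T p.1)) • Measure.dirac (p.1 : ℝ))

/-- The integrand `g_a` appearing in the generalized exponential function. -/
def gExp (T : Set ℝ) (a : ℝ) (τ : ℝ) : ℝ :=
  if 0 < tsGrain T τ then Real.log (1 + tsGrain T τ * a) / tsGrain T τ else a

/-- The generalized exponential function `e_{⊖a}(t, s)` (intended for `s ≤ t`). -/
def eOminus (T : Set ℝ) (a t s : ℝ) : ℝ :=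
  Real.exp (-∫ τ in Ico s t ∩ T, gExp T a τ ∂(deltaMeasure T))

/-- `t̄ = min([0,∞) ∩ T)`. -/
def tsT0 (T : Set ℝ) : ℝ := sInf {t : ℝ | t ∈ T ∧ 0 ≤ t}

/-- `Q_r = [t̄ - r, t̄ + r] ∩ T`. -/
def Qr (T : Set ℝ) (r : ℝ) : Set ℝ := Icc (tsT0 T - r) (tsT0 T + r) ∩ T

/-- `u(Q_r) = ∫_{Q_r} u dμ_Δ`. -/
def uQ (T : Set ℝ) (u : ℝ → ℝ) (r : ℝ) : ℝ := ∫ t in Qr T r, u t ∂(deltaMeasure T)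

/-- The filter `r → ∞` along `Π`. -/
def alongPi (T : Set ℝ) : Filter ℝ := atTop ⊓ 𝓟 (tsPi T)

/-- The filter `|t| → ∞`, `t ∈ T`. -/
def absAtTopIn (T : Set ℝ) : Filter ℝ := (atTop ⊔ atBot) ⊓ 𝓟 T

/-- The class `U_∞` of admissible weights on the time scale `T`. -/
def UInfty (T : Set ℝ) (u : ℝ → ℝ) : Prop :=
  Measurable u ∧ (∀ t ∈ T, 0 < u t) ∧
  (∀ s : Set ℝ, Bornology.IsBounded s → IntegrableOn u (s ∩ T) (deltaMeasure T)) ∧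
  (∃ c > 0, ∀ t ∈ T, c ≤ u t) ∧
  Tendsto (uQ T u) (alongPi T) atTop

/-- The class `U_∞^Inv` of weights:
`limsup_{|t|→∞, t∈T} u(t+s)/u(t) < ∞` for every `s ∈ Π`. -/
def UInftyInv (T : Set ℝ) (u : ℝ → ℝ) : Prop :=
  UInfty T u ∧ ∀ s ∈ tsPi T, ∃ C : ℝ, ∀ᶠ t in absAtTopIn T, u (t + s) / u t ≤ C

variable {E : Type*} [NormedAddCommGroup E]

/-- Almost periodic functions on a time scale (Bohr-type definition via `Π`). -/
def APfun (T : Set ℝ) (f : ℝ → E) : Prop :=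
  ContinuousOn f T ∧
  ∀ ε > 0, ∃ l > 0, ∀ x : ℝ, ∃ τ ∈ tsPi T, τ ∈ Icc x (x + l) ∧
    ∀ t ∈ T, ‖f (t + τ) - f t‖ < ε

/-- Bounded continuous functions on the time scale `T`. -/
def BCfun (T : Set ℝ) (f : ℝ → E) : Prop :=
  ContinuousOn f T ∧ ∃ C : ℝ, ∀ t ∈ T, ‖f t‖ ≤ C

/-- The weighted ergodic space `PAP₀(T, E, u)`. -/
def PAP0fun (T : Set ℝ) (u : ℝ → ℝ) (f : ℝ → E) : Prop :=
  BCfun T f ∧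
  Tendsto (fun r => (uQ T u r)⁻¹ * ∫ t in Qr T r, ‖f t‖ * u t ∂(deltaMeasure T))
    (alongPi T) (nhds 0)

/-- Weighted pseudo-almost periodic functions on the time scale `T`. -/
def PAPfun (T : Set ℝ) (u : ℝ → ℝ) (f : ℝ → E) : Prop :=
  ∃ g h : ℝ → E, APfun T g ∧ PAP0fun T u h ∧ ∀ t ∈ T, f t = g t + h t

/-- `d` is the Δ-derivative of `f` at `t ∈ T`. -/
def deltaDeriv [NormedSpace ℝ E] (T : Set ℝ) (f : ℝ → E) (t : ℝ) (d : E) : Prop :=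
  ∀ ε > 0, ∃ δ > 0, ∀ s ∈ T, |s - t| < δ →
    ‖f (tsSigma T t) - f s - (tsSigma T t - s) • d‖ ≤ ε * |tsSigma T t - s|

/-- A fixed matrix norm (the ℓ¹ norm of the entries). -/
def matNorm {n : ℕ} (M : Matrix (Fin n) (Fin n) ℝ) : ℝ := ∑ i, ∑ j, |M i j|

/-- The linear system `x^Δ = A(t) x` admits an exponential dichotomy on `T`. -/
def ExpDichotomy {n : ℕ} (T : Set ℝ) (A : ℝ → Matrix (Fin n) (Fin n) ℝ) : Prop :=
  ∃ K > (0 : ℝ), ∃ α > (0 : ℝ), ∃ P : Matrix (Fin n) (Fin n) ℝ, P * P = P ∧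
    ∃ X : ℝ → Matrix (Fin n) (Fin n) ℝ,
      (∀ t ∈ T, IsUnit (X t)) ∧
      (∀ t ∈ T, ∀ i j, deltaDeriv T (fun s => X s i j) t ((A t * X t) i j)) ∧
      (∀ s ∈ T, ∀ t ∈ T, tsSigma T s ≤ t →
        matNorm (X t * P * (X (tsSigma T s))⁻¹) ≤ K * eOminus T α t (tsSigma T s)) ∧
      (∀ s ∈ T, ∀ t ∈ T, t ≤ tsSigma T s →
        matNorm (X t * (1 - P) * (X (tsSigma T s))⁻¹) ≤ K * eOminus T α (tsSigma T s) t)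

/-- `x` is a bounded continuous solution on `T` of `x^Δ(t) = A(t) x(t) + F(t)`. -/
def IsLinBddSol {n : ℕ} (T : Set ℝ) (A : ℝ → Matrix (Fin n) (Fin n) ℝ)
    (F x : ℝ → Fin n → ℝ) : Prop :=
  BCfun T x ∧ ∀ t ∈ T, deltaDeriv T x t ((A t).mulVec (x t) + F t)

/-- `x` is a (continuous, Δ-differentiable) solution of the delayed cellular neural network
on the set `S ⊆ T`. -/
def IsCNNSol {n : ℕ} (T S : Set ℝ) (c : Fin n → ℝ → ℝ) (a b : Fin n → Fin n → ℝ → ℝ)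
    (f : Fin n → ℝ → ℝ) (γ : Fin n → Fin n → ℝ) (I : Fin n → ℝ → ℝ)
    (x : ℝ → Fin n → ℝ) : Prop :=
  ContinuousOn x T ∧
  ∀ t ∈ S, ∀ i, deltaDeriv T (fun s => x s i) t
    (-(c i t) * x t i + (∑ j, a i j t * f j (x t j)) +
      (∑ j, b i j t * f j (x (t - γ i j) j)) + I i t)

/-! Almost periodic functions are bounded and uniformly continuous, and two of them have
relatively dense common translation numbers: pick `ε`-translation numbers `τ₁ x, τ₂ x ∈ [x, x + l]`
of `f` and `g`; the bounded differences `τ₁ x - τ₂ x` admit a finite `δ`-net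
`{τ₁ y - τ₂ y : y ∈ Y}`, and then `τ₁ x - τ₁ y` is a translation number of `f` which is `δ`-close
to the translation number `τ₂ x - τ₂ y` of `g`. Hence `t ↦ (f t, g t)` is almost periodic, and so
are sums and products of almost periodic functions. On the ergodic side, `PAP₀` is closed under
sums and under multiplication by bounded functions, because its defining weighted mean is monotone
and additive in `‖φ‖`. -/

variable {F G : Type*} [NormedAddCommGroup F] [NormedAddCommGroup G] {T : Set ℝ}

lemma tsPi_sub {a b : ℝ} (ha : a ∈ tsPi T) (hb : b ∈ tsPi T) : a - b ∈ tsPi T := fun t ht =>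
  ⟨by convert (ha _ (hb t ht).2).1 using 1; ring, by convert (ha _ (hb t ht).1).2 using 1; ring⟩

def IsTranslationNumber (T : Set ℝ) (f : ℝ → E) (ε τ : ℝ) : Prop :=
  τ ∈ tsPi T ∧ ∀ t ∈ T, ‖f (t + τ) - f t‖ < ε

lemma apfun_iff {f : ℝ → E} : APfun T f ↔ ContinuousOn f T ∧
    ∀ ε > 0, ∃ l > 0, ∀ x : ℝ, ∃ τ ∈ Icc x (x + l), IsTranslationNumber T f ε τ :=
  and_congr_right' <| forall₂_congr fun _ _ => exists_congr fun _ => and_congr_right' <|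
    forall_congr' fun _ => exists_congr fun _ => and_left_comm

namespace IsTranslationNumber

lemma mono {f : ℝ → E} {ε ε' τ : ℝ} (h : IsTranslationNumber T f ε τ) (hε : ε ≤ ε') :
    IsTranslationNumber T f ε' τ :=
  ⟨h.1, fun t ht => (h.2 t ht).trans_le hε⟩

lemma sub {f : ℝ → E} {ε ε' a b : ℝ} (ha : IsTranslationNumber T f ε a)
    (hb : IsTranslationNumber T f ε' b) : IsTranslationNumber T f (ε + ε') (a - b) := by
  refine ⟨tsPi_sub ha.1 hb.1, fun t ht => ?_⟩
  have hs : t - b ∈ T := (hb.1 t ht).2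
  calc ‖f (t + (a - b)) - f t‖ = ‖(f (t - b + a) - f (t - b)) - (f (t - b + b) - f (t - b))‖ := by
        rw [sub_add_cancel, sub_sub_sub_cancel_right, sub_add_eq_add_sub, add_sub_assoc]
    _ ≤ ‖f (t - b + a) - f (t - b)‖ + ‖f (t - b + b) - f (t - b)‖ := norm_sub_le _ _
    _ < ε + ε' := add_lt_add (ha.2 _ hs) (hb.2 _ hs)

lemma of_dist_lt {f : ℝ → E} {ε ε' δ a c : ℝ}
    (hf : ∀ t ∈ T, ∀ s ∈ T, dist t s < δ → dist (f t) (f s) < ε')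
    (ha : IsTranslationNumber T f ε a) (hc : c ∈ tsPi T) (hca : dist c a < δ) :
    IsTranslationNumber T f (ε' + ε) c := by
  refine ⟨hc, fun t ht => ?_⟩
  calc ‖f (t + c) - f t‖ ≤ ‖f (t + c) - f (t + a)‖ + ‖f (t + a) - f t‖ :=
        norm_sub_le_norm_sub_add_norm_sub _ _ _
    _ < ε' + ε := by
        refine add_lt_add ?_ (ha.2 t ht)
        rw [← dist_eq_norm]
        exact hf _ (hc t ht).1 _ (ha.1 t ht).1 (by rwa [dist_add_left])

lemma prodMk {f : ℝ → E} {g : ℝ → F} {ε τ : ℝ} (hf : IsTranslationNumber T f ε τ)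
    (hg : IsTranslationNumber T g ε τ) : IsTranslationNumber T (fun t => (f t, g t)) ε τ :=
  ⟨hf.1, fun t ht => by
    simpa only [Prod.norm_def, Prod.fst_sub, Prod.snd_sub, max_lt_iff] using ⟨hf.2 t ht, hg.2 t ht⟩⟩

end IsTranslationNumber

lemma exists_finite_forall_exists_dist_lt {α X : Type*} [PseudoMetricSpace X] {d : α → X}
    (hd : TotallyBounded (range d)) {δ : ℝ} (hδ : 0 < δ) :
    ∃ Y : Set α, Y.Finite ∧ ∀ x, ∃ y ∈ Y, dist (d x) (d y) < δ := by
  obtain ⟨N, hN, hNf, hcov⟩ := Metric.finite_approx_of_totallyBounded hd δ hδ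
  obtain ⟨Y, -, hY, rfl⟩ := exists_subset_image_finite_and.1 ⟨N, image_univ ▸ hN, hNf, rfl⟩
  refine ⟨Y, hY, fun x => ?_⟩
  obtain ⟨-, ⟨y, hy, rfl⟩, hx⟩ := mem_iUnion₂.1 (hcov (mem_range_self x))
  exact ⟨y, hy, hx⟩

namespace APfun

lemma comp_uniformContinuousOn {f : ℝ → E} {φ : E → F} {S : Set E} (hf : APfun T f)
    (hφ : UniformContinuousOn φ S) (hS : MapsTo f T S) : APfun T (fun t => φ (f t)) := by
  rw [apfun_iff] at hf ⊢
  refine ⟨hφ.continuousOn.comp hf.1 hS, fun ε hε => ?_⟩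
  obtain ⟨δ, hδ, hφδ⟩ := Metric.uniformContinuousOn_iff.1 hφ ε hε
  obtain ⟨l, hl, hfl⟩ := hf.2 δ hδ
  refine ⟨l, hl, fun x => ?_⟩
  obtain ⟨τ, hτI, hτ⟩ := hfl x
  refine ⟨τ, hτI, hτ.1, fun t ht => ?_⟩
  rw [← dist_eq_norm]
  exact hφδ _ (hS (hτ.1 t ht).1) _ (hS ht) (by rw [dist_eq_norm]; exact hτ.2 t ht)

variable (hTc : IsClosed T)
include hTc

lemma bcfun {f : ℝ → E} (hf : APfun T f) : BCfun T f := by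
  rw [apfun_iff] at hf
  obtain ⟨l, -, hl⟩ := hf.2 1 one_pos
  obtain ⟨C, hC⟩ := ((isCompact_Icc (a := 0) (b := l)).inter_right hTc).exists_bound_of_continuousOn
    (hf.1.mono inter_subset_right)
  refine ⟨hf.1, C + 1, fun t ht => ?_⟩
  obtain ⟨τ, hτI, hτ⟩ := hl (-t)
  calc ‖f t‖ ≤ ‖f (t + τ)‖ + ‖f (t + τ) - f t‖ := norm_le_norm_add_norm_sub _ _
    _ ≤ C + 1 := add_le_add (hC _ ⟨⟨by linarith [hτI.1], by linarith [hτI.2]⟩, (hτ.1 t ht).1⟩)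
        (hτ.2 t ht).le

lemma uniformContinuousOn {f : ℝ → E} (hf : APfun T f) : UniformContinuousOn f T := by
  rw [apfun_iff] at hf
  refine Metric.uniformContinuousOn_iff.2 fun ε hε => ?_
  obtain ⟨l, -, hl⟩ := hf.2 (ε / 3) (by positivity)
  have hK := (isCompact_Icc (a := -1) (b := l + 1)).inter_right hTc
  obtain ⟨δ, hδ, hfK⟩ := Metric.uniformContinuousOn_iff.1
    (hK.uniformContinuousOn_of_continuous (hf.1.mono inter_subset_right)) (ε / 3) (by positivity)
  refine ⟨min δ 1, by positivity, fun t ht s hs hts => ?_⟩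
  obtain ⟨τ, hτI, hτ⟩ := hl (-t)
  have hclose := abs_lt.1 ((Real.dist_eq t s).symm ▸ hts.trans_le (min_le_right _ _))
  have hmid : dist (f (t + τ)) (f (s + τ)) < ε / 3 :=
    hfK _ ⟨⟨by linarith [hτI.1], by linarith [hτI.2]⟩, (hτ.1 t ht).1⟩
      _ ⟨⟨by linarith [hτI.1], by linarith [hτI.2]⟩, (hτ.1 s hs).1⟩
      (by rw [dist_add_right]; exact hts.trans_le (min_le_left _ _))
  calc dist (f t) (f s) ≤ dist (f t) (f (t + τ)) + dist (f (t + τ)) (f (s + τ)) +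
        dist (f (s + τ)) (f s) := dist_triangle4 _ _ _ _
    _ < ε / 3 + ε / 3 + ε / 3 := by
        rw [dist_comm (f t), dist_eq_norm (f (t + τ)), dist_eq_norm (f (s + τ))]
        exact add_lt_add (add_lt_add (hτ.2 t ht) hmid) (hτ.2 s hs)
    _ = ε := add_thirds ε

lemma prodMk {f : ℝ → E} {g : ℝ → F} (hf : APfun T f) (hg : APfun T g) :
    APfun T (fun t => (f t, g t)) := by
  have hgc := Metric.uniformContinuousOn_iff.1 (hg.uniformContinuousOn hTc)
  rw [apfun_iff] at hf hg ⊢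
  refine ⟨hf.1.prodMk hg.1, fun ε hε => ?_⟩
  obtain ⟨δ, hδ, hgδ⟩ := hgc (ε / 2) (half_pos hε)
  obtain ⟨l₁, hl₁, hf'⟩ := hf.2 (ε / 2) (half_pos hε)
  obtain ⟨l₂, -, hg'⟩ := hg.2 (ε / 4) (by positivity)
  choose τ₁ hτ₁I hτ₁ using hf'
  choose τ₂ hτ₂I hτ₂ using hg'
  have hd : TotallyBounded (range fun x => τ₁ x - τ₂ x) :=
    (isCompact_Icc (a := -l₂) (b := l₁)).totallyBounded.subset <| range_subset_iff.2 fun x =>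
      mem_Icc.2 ⟨by linarith [(hτ₁I x).1, (hτ₂I x).2], by linarith [(hτ₁I x).2, (hτ₂I x).1]⟩
  obtain ⟨Y, hY, hnet⟩ := exists_finite_forall_exists_dist_lt hd hδ
  obtain ⟨M, hM⟩ := (hY.image fun y => |τ₁ y|).bddAbove
  have hM0 : 0 ≤ M := by
    obtain ⟨y, hy, -⟩ := hnet 0
    exact (abs_nonneg _).trans (hM (mem_image_of_mem _ hy))
  refine ⟨l₁ + 2 * M, by positivity, fun x => ?_⟩
  obtain ⟨y, hy, hxy⟩ := hnet (x + M)
  have hyM := abs_le.1 (hM (mem_image_of_mem _ hy))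
  refine ⟨τ₁ (x + M) - τ₁ y,
    ⟨by linarith [(hτ₁I (x + M)).1], by linarith [(hτ₁I (x + M)).2]⟩, ?_⟩
  have hfτ := (hτ₁ (x + M)).sub (hτ₁ y)
  have hgτ := ((hτ₂ (x + M)).sub (hτ₂ y)).of_dist_lt hgδ hfτ.1
    (by convert hxy using 1; simp only [Real.dist_eq]; ring_nf)
  exact (hfτ.mono (add_halves ε).le).prodMk (hgτ.mono (by linarith))

lemma add {f g : ℝ → E} (hf : APfun T f) (hg : APfun T g) : APfun T (fun t => f t + g t) :=
  (hf.prodMk hTc hg).comp_uniformContinuousOn uniformContinuous_add.uniformContinuousOn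
    (mapsTo_univ _ _)

lemma mul {R : Type*} [NormedRing R] [ProperSpace R] {f g : ℝ → R} (hf : APfun T f)
    (hg : APfun T g) : APfun T (fun t => f t * g t) := by
  obtain ⟨C, hC⟩ := ((hf.prodMk hTc hg).bcfun hTc).2
  exact (hf.prodMk hTc hg).comp_uniformContinuousOn
    ((isCompact_closedBall 0 C).uniformContinuousOn_of_continuous continuous_mul.continuousOn)
    fun t ht => mem_closedBall_zero_iff.2 (hC t ht)

end APfun

namespace BCfun

lemma add {f g : ℝ → E} (hf : BCfun T f) (hg : BCfun T g) : BCfun T (fun t => f t + g t) := by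
  obtain ⟨Cf, hCf⟩ := hf.2
  obtain ⟨Cg, hCg⟩ := hg.2
  exact ⟨hf.1.add hg.1, Cf + Cg, fun t ht =>
    (norm_add_le _ _).trans (add_le_add (hCf t ht) (hCg t ht))⟩

lemma mul {R : Type*} [NormedRing R] {f g : ℝ → R} (hf : BCfun T f) (hg : BCfun T g) :
    BCfun T (fun t => f t * g t) := by
  obtain ⟨Cf, hCf⟩ := hf.2
  obtain ⟨Cg, hCg⟩ := hg.2
  refine ⟨hf.1.mul hg.1, Cf * Cg, fun t ht => (norm_mul_le _ _).trans ?_⟩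
  exact mul_le_mul (hCf t ht) (hCg t ht) (norm_nonneg _) ((norm_nonneg _).trans (hCf t ht))

end BCfun

lemma measurableSet_Qr (hTc : IsClosed T) (r : ℝ) : MeasurableSet (Qr T r) :=
  measurableSet_Icc.inter hTc.measurableSet

section Ergodic

variable {u : ℝ → ℝ} (hTc : IsClosed T) (hu : UInfty T u)
include hTc hu

lemma uQ_nonneg (r : ℝ) : 0 ≤ uQ T u r :=
  setIntegral_nonneg (measurableSet_Qr hTc r) fun t ht => (hu.2.1 t ht.2).le

lemma integrableOn_norm_mul_weight {φ : ℝ → E} (hφ : BCfun T φ) (r : ℝ) :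
    IntegrableOn (fun t => ‖φ t‖ * u t) (Qr T r) (deltaMeasure T) := by
  obtain ⟨C, hC⟩ := hφ.2
  exact (hu.2.2.1 _ (Metric.isBounded_Icc _ _)).bdd_mul
    ((hφ.1.mono inter_subset_right).norm.aestronglyMeasurable (measurableSet_Qr hTc r))
    ((ae_restrict_iff' (measurableSet_Qr hTc r)).2 (ae_of_all _ fun t ht => by
      simpa only [norm_norm] using hC t ht.2))

lemma setIntegral_norm_mul_weight_le {φ : ℝ → E} {ψ₁ : ℝ → F} {ψ₂ : ℝ → G} (hφ : BCfun T φ)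
    (h₁ : BCfun T ψ₁) (h₂ : BCfun T ψ₂) {C : ℝ} (hle : ∀ t ∈ T, ‖φ t‖ ≤ C * (‖ψ₁ t‖ + ‖ψ₂ t‖))
    (r : ℝ) :
    ∫ t in Qr T r, ‖φ t‖ * u t ∂(deltaMeasure T) ≤
      C * (∫ t in Qr T r, ‖ψ₁ t‖ * u t ∂(deltaMeasure T) +
        ∫ t in Qr T r, ‖ψ₂ t‖ * u t ∂(deltaMeasure T)) := by
  have i₁ := integrableOn_norm_mul_weight hTc hu h₁ r
  have i₂ := integrableOn_norm_mul_weight hTc hu h₂ r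
  rw [← integral_add i₁ i₂, ← integral_const_mul]
  refine setIntegral_mono_on (integrableOn_norm_mul_weight hTc hu hφ r) ((i₁.add i₂).const_mul C)
    (measurableSet_Qr hTc r) fun t ht => ?_
  calc ‖φ t‖ * u t ≤ C * (‖ψ₁ t‖ + ‖ψ₂ t‖) * u t :=
        mul_le_mul_of_nonneg_right (hle t ht.2) (hu.2.1 t ht.2).le
    _ = C * (‖ψ₁ t‖ * u t + ‖ψ₂ t‖ * u t) := by ring

lemma PAP0fun.of_norm_le {φ : ℝ → E} {ψ₁ : ℝ → F} {ψ₂ : ℝ → G} (hφ : BCfun T φ)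
    (h₁ : PAP0fun T u ψ₁) (h₂ : PAP0fun T u ψ₂) {C : ℝ}
    (hle : ∀ t ∈ T, ‖φ t‖ ≤ C * (‖ψ₁ t‖ + ‖ψ₂ t‖)) : PAP0fun T u φ := by
  have hinv (r : ℝ) : 0 ≤ (uQ T u r)⁻¹ := inv_nonneg.2 (uQ_nonneg hTc hu r)
  refine ⟨hφ, squeeze_zero (fun r => ?_) (fun r => ?_)
    (by simpa only [add_zero, mul_zero] using (h₁.2.add h₂.2).const_mul C)⟩
  · exact mul_nonneg (hinv r) (setIntegral_nonneg (measurableSet_Qr hTc r) fun t ht =>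
      mul_nonneg (norm_nonneg _) (hu.2.1 t ht.2).le)
  · calc _ ≤ (uQ T u r)⁻¹ * (C * (∫ t in Qr T r, ‖ψ₁ t‖ * u t ∂(deltaMeasure T) +
            ∫ t in Qr T r, ‖ψ₂ t‖ * u t ∂(deltaMeasure T))) :=
          mul_le_mul_of_nonneg_left
            (setIntegral_norm_mul_weight_le hTc hu hφ h₁.1 h₂.1 hle r) (hinv r)
      _ = _ := by ring

end Ergodic

namespace PAP0fun

variable {u : ℝ → ℝ}

lemma zero : PAP0fun T u (fun _ => (0 : E)) :=
  ⟨⟨continuousOn_const, 0, fun _ _ => norm_zero.le⟩, by simpa using tendsto_const_nhds⟩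

variable (hTc : IsClosed T) (hu : UInfty T u)
include hTc hu

lemma add {h₁ h₂ : ℝ → E} (hh₁ : PAP0fun T u h₁) (hh₂ : PAP0fun T u h₂) :
    PAP0fun T u (fun t => h₁ t + h₂ t) :=
  of_norm_le hTc hu (hh₁.1.add hh₂.1) hh₁ hh₂ (C := 1) fun _ _ => by
    rw [one_mul]; exact norm_add_le _ _

variable {R : Type*} [NormedRing R]

lemma mul_bcfun {h b : ℝ → R} (hh : PAP0fun T u h) (hb : BCfun T b) :
    PAP0fun T u (fun t => h t * b t) := by
  obtain ⟨C, hC⟩ := hb.2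
  refine of_norm_le hTc hu (hh.1.mul hb) hh (zero (E := R)) (C := C) fun t ht => ?_
  rw [norm_zero, add_zero, mul_comm]
  exact (norm_mul_le _ _).trans (mul_le_mul_of_nonneg_left (hC t ht) (norm_nonneg _))

lemma bcfun_mul {h b : ℝ → R} (hh : PAP0fun T u h) (hb : BCfun T b) :
    PAP0fun T u (fun t => b t * h t) := by
  obtain ⟨C, hC⟩ := hb.2
  refine of_norm_le hTc hu (hb.mul hh.1) hh (zero (E := R)) (C := C) fun t ht => ?_
  rw [norm_zero, add_zero]
  exact (norm_mul_le _ _).trans (mul_le_mul_of_nonneg_right (hC t ht) (norm_nonneg _))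

end PAP0fun

lemma APfun.papfun {u : ℝ → ℝ} {g : ℝ → E} (hg : APfun T g) : PAPfun T u g :=
  ⟨g, _, hg, PAP0fun.zero, fun _ _ => (add_zero _).symm⟩

namespace PAPfun

variable {u : ℝ → ℝ} (hTc : IsClosed T) (hu : UInfty T u)
include hTc hu

lemma add {f g : ℝ → E} (hf : PAPfun T u f) (hg : PAPfun T u g) :
    PAPfun T u (fun t => f t + g t) := by
  obtain ⟨f₁, f₂, hf₁, hf₂, hf⟩ := hf
  obtain ⟨g₁, g₂, hg₁, hg₂, hg⟩ := hg
  exact ⟨_, _, hf₁.add hTc hg₁, hf₂.add hTc hu hg₂,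
    fun t ht => by dsimp only; rw [hf t ht, hg t ht, add_add_add_comm]⟩

lemma mul {R : Type*} [NormedRing R] [ProperSpace R] {f g : ℝ → R} (hf : PAPfun T u f)
    (hg : PAPfun T u g) : PAPfun T u (fun t => f t * g t) := by
  obtain ⟨f₁, f₂, hf₁, hf₂, hf⟩ := hf
  obtain ⟨g₁, g₂, hg₁, hg₂, hg⟩ := hg
  have hg' : BCfun T (fun t => g₁ t + g₂ t) := (hg₁.bcfun hTc).add hg₂.1
  refine ⟨_, _, hf₁.mul hTc hg₁,
    (hg₂.bcfun_mul hTc hu (hf₁.bcfun hTc)).add hTc hu (hf₂.mul_bcfun hTc hu hg'),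
    fun t ht => ?_⟩
  dsimp only
  rw [hf t ht, hg t ht, add_mul, mul_add, add_assoc]

end PAPfun

/-- Algebraic properties of `PAP(T,ℝ,u)` for `u ∈ U_∞^Inv`: it is closed under sums and
pointwise products, and products of a `PAP` function with an `AP` function stay in `PAP`. -/
theorem pap_add_mul (T : Set ℝ) (hT : APTimeScale T)
    (u : ℝ → ℝ) (hu : UInftyInv T u) (f g : ℝ → ℝ) :
    (PAPfun T u f → PAPfun T u g →
      PAPfun T u (fun t => f t + g t) ∧ PAPfun T u (fun t => f t * g t)) ∧
    (PAPfun T u f → APfun T g → PAPfun T u (fun t => f t * g t)) :=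
  ⟨fun hf hg => ⟨hf.add hT.2.1 hu.1 hg, hf.mul hT.2.1 hu.1 hg⟩,
    fun hf hg => hf.mul hT.2.1 hu.1 hg.papfun⟩
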